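/- For every r ≥ 0 and every n ≥ 0, the coefficient [z^n]B_r(z) equals the number of binary trees with n internal nodes whose register function value is at most r. -/

import Mathlib

/-!
Write `G_s(z) = ∑_{t ∈ s} z^|t|`. For `0 ≤ z ≤ 1/4` every such series converges with sum at
most `2`: the sums `S_k` over the trees of height at most `k` satisfy `S_{k+1} = 1 + z S_k²`,
and `1 + 4z ≤ 2`.

A tree has register `p + 1` iff both root subtrees have register `p`, or one has register
`p + 1` and the other at most `p`. So the series `E_p`, `L_p` of the trees of register `= p`
and `≤ p` satisfy `E_{p+1} = z E_p² + 2z L_p E_{p+1}`, which determines `E_{p+1}` because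
`2z L_p ≤ 4z < 1`. The functions `D_r` obeying the recursion of `B_r` without its constant
term satisfy the same equation, `D_{p+1} (1 - 2z B_p) = z D_p²`, and `B_{p+1} = B_p + D_{p+1}`;
by induction `E_p = D_p` and `L_p = B_p`, and the coefficients of `L_r` count the trees.
-/

inductive BTree : Type
  | leaf : BTree
  | node : BTree → BTree → BTree
deriving DecidableEq

namespace BTree

def size : BTree → ℕ
  | leaf => 0
  | node t₁ t₂ => t₁.size + t₂.size + 1

def reg : BTree → ℕ
  | leaf => 0
  | node t₁ t₂ => if t₁.reg = t₂.reg then t₁.reg + 1 else max t₁.reg t₂.reg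

end BTree

noncomputable def Br : ℕ → ℝ → ℝ
  | 0, _ => 1
  | r + 1, z => 1 + z / (1 - 2 * z) * Br r (z ^ 2 / (1 - 2 * z) ^ 2)

lemma Br_succ (r : ℕ) (z : ℝ) :
    Br (r + 1) z = 1 + z / (1 - 2 * z) * Br r (z ^ 2 / (1 - 2 * z) ^ 2) := rfl

noncomputable def Dr : ℕ → ℝ → ℝ
  | 0, _ => 1
  | r + 1, z => z / (1 - 2 * z) * Dr r (z ^ 2 / (1 - 2 * z) ^ 2)

lemma Dr_succ (r : ℕ) (z : ℝ) :
    Dr (r + 1) z = z / (1 - 2 * z) * Dr r (z ^ 2 / (1 - 2 * z) ^ 2) := rfl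

lemma Br_succ_eq_add_Dr : ∀ (r : ℕ) (z : ℝ), Br (r + 1) z = Br r z + Dr (r + 1) z
  | 0, z => by simp [Br, Dr]
  | r + 1, z => by
    rw [Br_succ (r + 1) z, Br_succ r z, Dr_succ (r + 1) z, Br_succ_eq_add_Dr r]
    ring

lemma sq_div_one_sub_two_mul_sq_mem_Ico {z : ℝ} (hz : z ∈ Set.Ico 0 (1 / 4)) :
    z ^ 2 / (1 - 2 * z) ^ 2 ∈ Set.Ico 0 (1 / 4) := by
  obtain ⟨h₀, h₁⟩ := hz
  refine ⟨by positivity, ?_⟩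
  rw [div_lt_iff₀ (by nlinarith)]
  nlinarith

lemma Dr_succ_mul : ∀ (r : ℕ) {z : ℝ}, z ∈ Set.Ico 0 (1 / 4) →
    Dr (r + 1) z * (1 - 2 * z * Br r z) = z * Dr r z ^ 2
  | 0, z, hz => by
    have hw : z / (1 - 2 * z) * (1 - 2 * z) = z := div_mul_cancel₀ z (by linarith [hz.2])
    simpa [Dr, Br] using hw
  | r + 1, z, hz => by
    have hw : z / (1 - 2 * z) * (1 - 2 * z) = z := div_mul_cancel₀ z (by linarith [hz.2])
    have ih := Dr_succ_mul r (sq_div_one_sub_two_mul_sq_mem_Ico hz)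
    rw [Dr_succ (r + 1) z, Br_succ r z, Dr_succ r z]
    rw [← div_pow] at ih ⊢
    linear_combination z * ih + Dr (r + 1) ((z / (1 - 2 * z)) ^ 2) * hw

namespace BTree

variable {z : ℝ}

lemma injective2_node : Function.Injective2 node := fun _ _ _ _ h => node.inj h

def heightLE : ℕ → Finset BTree
  | 0 => {leaf}
  | k + 1 => insert leaf ((heightLE k ×ˢ heightLE k).image (Function.uncurry node))

lemma monotone_heightLE : Monotone heightLE := by
  refine monotone_nat_of_le_succ fun k => ?_
  induction k with
  | zero => exact Finset.singleton_subset_iff.2 (Finset.mem_insert_self _ _)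
  | succ k ih =>
    exact Finset.insert_subset_insert _
      (Finset.image_subset_image (Finset.product_subset_product ih ih))

lemma mem_heightLE_size (t : BTree) : t ∈ heightLE t.size := by
  induction t with
  | leaf => exact Finset.mem_singleton_self _
  | node a b iha ihb =>
    refine Finset.mem_insert_of_mem
      (Finset.mem_image.2 ⟨(a, b), Finset.mem_product.2 ⟨?_, ?_⟩, rfl⟩)
    · exact monotone_heightLE (Nat.le_add_right _ _) iha
    · exact monotone_heightLE (Nat.le_add_left _ _) ihb

lemma sum_heightLE_pow_size_le_two (h₀ : 0 ≤ z) (h₁ : z ≤ 1 / 4) (k : ℕ) :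
    ∑ t ∈ heightLE k, z ^ t.size ≤ 2 := by
  induction k with
  | zero => norm_num [heightLE, size]
  | succ k ih =>
    set S := ∑ t ∈ heightLE k, z ^ t.size
    have hS : 0 ≤ S := Finset.sum_nonneg fun t _ => pow_nonneg h₀ _
    have hsum : ∑ t ∈ heightLE (k + 1), z ^ t.size = 1 + z * (S * S) := by
      rw [heightLE, Finset.sum_insert (by simp), Finset.sum_image injective2_node.uncurry.injOn,
        Finset.sum_product, Finset.sum_mul_sum, Finset.mul_sum]
      simp only [Function.uncurry_apply_pair, size, pow_zero, pow_succ, pow_add, Finset.mul_sum]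
      exact congrArg _ (Finset.sum_congr rfl fun a _ => Finset.sum_congr rfl fun b _ => by ring)
    calc ∑ t ∈ heightLE (k + 1), z ^ t.size = 1 + z * (S * S) := hsum
      _ ≤ 1 + z * (2 * 2) := by gcongr
      _ ≤ 2 := by linarith

lemma sum_pow_size_le_two (h₀ : 0 ≤ z) (h₁ : z ≤ 1 / 4) (u : Finset BTree) :
    ∑ t ∈ u, z ^ t.size ≤ 2 := by
  have hu : u ⊆ heightLE (u.sup size) := fun t ht =>
    monotone_heightLE (Finset.le_sup ht) (mem_heightLE_size t)
  exact (Finset.sum_le_sum_of_subset_of_nonneg hu fun _ _ _ => pow_nonneg h₀ _).trans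
    (sum_heightLE_pow_size_le_two h₀ h₁ _)

lemma summable_pow_size (h₀ : 0 ≤ z) (h₁ : z ≤ 1 / 4) :
    Summable fun t : BTree => z ^ t.size :=
  summable_of_sum_le (fun _ => pow_nonneg h₀ _) (sum_pow_size_le_two h₀ h₁)

noncomputable def genFun (s : Set BTree) (z : ℝ) : ℝ := ∑' t : s, z ^ (t : BTree).size

lemma genFun_le_two (h₀ : 0 ≤ z) (h₁ : z ≤ 1 / 4) (s : Set BTree) : genFun s z ≤ 2 :=
  ((summable_pow_size h₀ h₁).tsum_subtype_le _ s fun _ => pow_nonneg h₀ _).trans <|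
    Real.tsum_le_of_sum_le (fun _ => pow_nonneg h₀ _) (sum_pow_size_le_two h₀ h₁)

lemma genFun_singleton (t : BTree) : genFun {t} z = z ^ t.size :=
  tsum_singleton t fun t : BTree => z ^ t.size

lemma genFun_union (hz : Summable fun t : BTree => z ^ t.size) {s u : Set BTree}
    (hsu : Disjoint s u) : genFun (s ∪ u) z = genFun s z + genFun u z :=
  Summable.tsum_union_disjoint (f := fun t : BTree => z ^ t.size) hsu
    (hz.subtype s) (hz.subtype u)

lemma genFun_image2_node (hz : Summable fun t : BTree => z ^ t.size) (s u : Set BTree) :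
    genFun (Set.image2 node s u) z = z * (genFun s z * genFun u z) := by
  rw [genFun, ← Set.image_uncurry_prod,
    tsum_image (fun t : BTree => z ^ t.size) injective2_node.uncurry.injOn,
    ← (Equiv.Set.prod s u).symm.tsum_eq, genFun, genFun,
    tsum_mul_tsum_of_summable_norm (f := fun t : s => z ^ (t : BTree).size)
      (g := fun t : u => z ^ (t : BTree).size) (hz.subtype s).norm (hz.subtype u).norm,
    ← tsum_mul_left]
  refine tsum_congr fun p => ?_
  change z ^ ((p.1 : BTree).size + (p.2 : BTree).size + 1) = _
  ring

lemma disjoint_image2_node {s s' u u' : Set BTree} (h : Disjoint s s' ∨ Disjoint u u') :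
    Disjoint (Set.image2 node s u) (Set.image2 node s' u') := by
  rw [Set.disjoint_left]
  rintro _ ⟨a, ha, b, hb, rfl⟩ ⟨a', ha', b', hb', he⟩
  obtain ⟨rfl, rfl⟩ := node.inj he
  rcases h with h | h
  · exact Set.disjoint_left.1 h ha ha'
  · exact Set.disjoint_left.1 h hb hb'

lemma reg_eq_zero_iff {t : BTree} : t.reg = 0 ↔ t = leaf := by
  cases t with
  | leaf => simp [reg]
  | node a b =>
    simp only [reg, reduceCtorEq, iff_false]
    split_ifs with h
    · exact not_false
    · omega

lemma setOf_reg_eq_zero : {t : BTree | t.reg = 0} = {leaf} :=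
  Set.ext fun _ => reg_eq_zero_iff

lemma reg_node_eq_succ_iff {a b : BTree} {p : ℕ} :
    (node a b).reg = p + 1 ↔
      a.reg = p ∧ b.reg = p ∨ a.reg ≤ p ∧ b.reg = p + 1 ∨ a.reg = p + 1 ∧ b.reg ≤ p := by
  by_cases h : a.reg = b.reg <;> simp [reg, h] <;> omega

lemma setOf_reg_eq_succ (p : ℕ) :
    {t : BTree | t.reg = p + 1} =
      Set.image2 node {t | t.reg = p} {t | t.reg = p} ∪
        (Set.image2 node {t | t.reg ≤ p} {t | t.reg = p + 1} ∪
          Set.image2 node {t | t.reg = p + 1} {t | t.reg ≤ p}) := by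
  ext t
  cases t with
  | leaf => simp [reg]
  | node a b =>
    simp only [Set.mem_union, Set.mem_image2_iff injective2_node]
    exact reg_node_eq_succ_iff

lemma genFun_reg_eq_succ (hz : Summable fun t : BTree => z ^ t.size) (p : ℕ) :
    genFun {t | t.reg = p + 1} z =
      z * genFun {t | t.reg = p} z ^ 2
        + 2 * z * genFun {t | t.reg ≤ p} z * genFun {t | t.reg = p + 1} z := by
  have hAC : Disjoint {t : BTree | t.reg = p} {t | t.reg = p + 1} :=
    Set.disjoint_left.2 fun t h₁ h₂ => by simp_all
  have hBC : Disjoint {t : BTree | t.reg ≤ p} {t | t.reg = p + 1} :=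
    Set.disjoint_left.2 fun t h₁ h₂ => by simp_all
  nth_rewrite 1 [setOf_reg_eq_succ]
  rw [genFun_union hz (Set.disjoint_union_right.2
      ⟨disjoint_image2_node (Or.inr hAC), disjoint_image2_node (Or.inl hAC)⟩),
    genFun_union hz (disjoint_image2_node (Or.inl hBC)), genFun_image2_node hz,
    genFun_image2_node hz, genFun_image2_node hz]
  ring

lemma genFun_reg_le_succ (hz : Summable fun t : BTree => z ^ t.size) (p : ℕ) :
    genFun {t | t.reg ≤ p + 1} z = genFun {t | t.reg ≤ p} z + genFun {t | t.reg = p + 1} z := by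
  have hunion : {t : BTree | t.reg ≤ p + 1} = {t | t.reg ≤ p} ∪ {t | t.reg = p + 1} := by
    ext t
    simp only [Set.mem_union, Set.mem_ofPred_eq]
    omega
  rw [hunion, genFun_union hz (Set.disjoint_left.2 fun t h₁ h₂ => by simp_all)]

theorem genFun_reg_eq_Dr_and_genFun_reg_le_Br (hz : z ∈ Set.Ico 0 (1 / 4)) :
    ∀ r : ℕ, genFun {t | t.reg = r} z = Dr r z ∧ genFun {t | t.reg ≤ r} z = Br r z
  | 0 => by
    have hle : {t : BTree | t.reg ≤ 0} = {t | t.reg = 0} := by simp only [Nat.le_zero]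
    rw [hle, setOf_reg_eq_zero, genFun_singleton]
    exact ⟨rfl, rfl⟩
  | r + 1 => by
    have hsum := summable_pow_size hz.1 hz.2.le
    obtain ⟨hD, hB⟩ := genFun_reg_eq_Dr_and_genFun_reg_le_Br hz r
    have hpos : 0 < 1 - 2 * z * Br r z := by
      nlinarith [hz.1, hz.2, hB ▸ genFun_le_two hz.1 hz.2.le {t | t.reg ≤ r}]
    have hD' : genFun {t | t.reg = r + 1} z = Dr (r + 1) z := by
      refine mul_right_cancel₀ hpos.ne' ?_
      rw [Dr_succ_mul r hz, ← hD, ← hB]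
      linear_combination genFun_reg_eq_succ hsum r
    exact ⟨hD', by rw [genFun_reg_le_succ hsum, hB, hD', Br_succ_eq_add_Dr]⟩

lemma hasSum_ncard_mul_pow (hz : Summable fun t : BTree => z ^ t.size) (s : Set BTree) :
    HasSum (fun n : ℕ => ({t | t.size = n ∧ t ∈ s}.ncard : ℝ) * z ^ n) (genFun s z) := by
  have hs : HasSum (fun t : s => z ^ (t : BTree).size) (genFun s z) := (hz.subtype s).hasSum
  refine (hs.tsum_fiberwise fun t : s => (t : BTree).size).congr_fun fun n => ?_
  have hfiber : {t | t.size = n ∧ t ∈ s} ≃ (fun t : s => (t : BTree).size) ⁻¹' {n} :=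
    (Equiv.subtypeEquivRight fun _ => and_comm).trans
      (Equiv.subtypeSubtypeEquivSubtypeInter (· ∈ s) (fun t => t.size = n)).symm
  rw [tsum_congr (g := fun _ => z ^ n) fun t => congrArg (z ^ ·) t.2, tsum_const,
    ← Nat.card_coe_set_eq, Nat.card_congr hfiber, nsmul_eq_mul]

end BTree

/-- For every `r ≥ 0`, the coefficient `[z^n] B_r(z)` equals the number of binary trees
with `n` internal nodes whose register function is at most `r` (stated via the power
series expansion of `B_r` on `0 ≤ z < 1/4`). -/
theorem coeff_Br_eq_card_trees_reg_le (r : ℕ) (z : ℝ) (h₀ : 0 ≤ z) (h₁ : z < 1 / 4) :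
    HasSum
      (fun n : ℕ => (Set.ncard {t : BTree | t.size = n ∧ t.reg ≤ r} : ℝ) * z ^ n)
      (Br r z) := by
  rw [← (BTree.genFun_reg_eq_Dr_and_genFun_reg_le_Br ⟨h₀, h₁⟩ r).2]
  exact BTree.hasSum_ncard_mul_pow (BTree.summable_pow_size h₀ h₁.le) {t | t.reg ≤ r}
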